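/- Let R be a weak Bourbaki unmixed commutative ring and G a finite group of ring automorphisms of R such that the order of G is a unit in R. Then the ring of invariants R^G is weak Bourbaki unmixed. -/

import Mathlib

/-!
Background definitions for non-Noetherian Cohen-Macaulayness
(Koszul grade, heights, weakly associated primes, etc.),
following Asgharzadeh–Tousi, "On the notion of Cohen-Macaulayness
for non Noetherian rings".
-/

noncomputable section
namespace NNCM

universe u

section Koszul

variable {R : Type*} [CommRing R]

/-- The differential of the Koszul cochain complex `Hom_R(K_•(x₁,…,xₙ), M)`, where the module of
`i`-cochains is realized as functions on strictly increasing `i`-tuples in `Fin n`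
(corresponding to the standard basis of the `i`-th exterior power of `Rⁿ`). -/
def koszulD {n : ℕ} (x : Fin n → R) (M : Type*) [AddCommGroup M] [Module R M] (i : ℕ) :
    ((Fin i ↪o Fin n) → M) →ₗ[R] ((Fin (i + 1) ↪o Fin n) → M) where
  toFun f s := ∑ k : Fin (i + 1),
    ((-1 : ℤ) ^ (k : ℕ)) • x (s k) • f ((Fin.succAboveOrderEmb k).trans s)
  map_add' f g := by
    funext s
    simp [smul_add, Finset.sum_add_distrib]
  map_smul' c f := by
    funext s
    rw [RingHom.id_apply]
    simp only [Pi.smul_apply, Finset.smul_sum]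
    refine Finset.sum_congr rfl fun k _ => ?_
    rw [smul_comm c, smul_comm c]

/-- `koszulHNonzero x M i` says that the `i`-th Koszul cohomology
`H^i(Hom_R(K_•(x), M))` is nonzero, i.e. there is an `i`-cocycle which is not an
`i`-coboundary. -/
def koszulHNonzero {n : ℕ} (x : Fin n → R) (M : Type*) [AddCommGroup M] [Module R M] :
    ℕ → Prop
  | 0 => LinearMap.ker (koszulD x M 0) ≠ ⊥
  | (j + 1) => ¬ LinearMap.ker (koszulD x M (j + 1)) ≤ LinearMap.range (koszulD x M j)

/-- The Koszul grade of a finite sequence `x` on `M`: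
`inf { i | H^i(Hom_R(K_•(x), M)) ≠ 0 }` (with `inf ∅ = +∞`). -/
def kgradeSeq {n : ℕ} (x : Fin n → R) (M : Type*) [AddCommGroup M] [Module R M] : ℕ∞ :=
  ⨅ (i : ℕ) (_ : koszulHNonzero x M i), (i : ℕ∞)

/-- The Koszul grade of an arbitrary ideal `a` on `M`: the supremum, over all finite sequences of
elements of `a` (equivalently, over all finitely generated subideals of `a`), of the Koszul
grade of the sequence on `M`. For a finitely generated ideal this agrees with the Koszul grade
computed from any finite generating set. -/
def kgrade (a : Ideal R) (M : Type*) [AddCommGroup M] [Module R M] : ℕ∞ :=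
  ⨆ (m : ℕ) (x : Fin m → R) (_ : ∀ k, x k ∈ a), kgradeSeq x M

/-- The height of an ideal: the infimum of the heights of the primes containing it. -/
def htIdeal (a : Ideal R) : ℕ∞ :=
  ⨅ (p : PrimeSpectrum R) (_ : a ≤ p.asIdeal), Order.height p

/-- `R` is Cohen-Macaulay in the sense of ideals: `ht a = K.grade(a, R)` for every ideal `a`. -/
def CMIdeals (R : Type*) [CommRing R] : Prop :=
  ∀ a : Ideal R, htIdeal a = kgrade a R

/-- `R` is Cohen-Macaulay in the sense of finitely generated ideals:
`ht a = K.grade(a, R)` for every finitely generated ideal `a`. -/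
def CMFGIdeals (R : Type*) [CommRing R] : Prop :=
  ∀ a : Ideal R, a.FG → htIdeal a = kgrade a R

/-- The Krull dimension of the localized module `M_p` over `R_p`, i.e. the Krull dimension
of the ring `R_p / Ann_{R_p}(M_p)`. -/
def dimLoc (M : Type*) [AddCommGroup M] [Module R M] (p : PrimeSpectrum R) : WithBot ℕ∞ :=
  ringKrullDim ((Localization.AtPrime p.asIdeal) ⧸
    Module.annihilator (Localization.AtPrime p.asIdeal)
      (LocalizedModule p.asIdeal.primeCompl M))

/-- The `M`-height of an ideal `a`: `inf { dim M_p | p prime, a ⊆ p, M_p ≠ 0 }`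
(with `inf ∅ = +∞`). -/
def htMod (a : Ideal R) (M : Type*) [AddCommGroup M] [Module R M] : WithBot ℕ∞ :=
  ⨅ (p : PrimeSpectrum R) (_ : a ≤ p.asIdeal) (_ : p ∈ Module.support R M), dimLoc M p

/-- The weakly associated primes of an `R`-module `M`: the primes which are minimal over
the annihilator `(0 :_R m)` of some element `m` of `M`. -/
def wAss (R : Type*) [CommRing R] (M : Type*) [AddCommGroup M] [Module R M] :
    Set (Ideal R) :=
  { p | ∃ m : M, p ∈ (Ideal.torsionOf R M m).minimalPrimes }

/-- The minimal number of generators of an ideal, as an element of `ℕ∞`. -/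
def mu (a : Ideal R) : ℕ∞ :=
  ⨅ (m : ℕ) (_ : ∃ x : Fin m → R, Ideal.span (Set.range x) = a), (m : ℕ∞)

/-- `R` is weak Bourbaki unmixed: for every finitely generated ideal `a` with `μ(a) ≤ ht a`,
the primes minimal over `a` are exactly the weakly associated primes of `R/a`. -/
def WBUnmixed (R : Type*) [CommRing R] : Prop :=
  ∀ a : Ideal R, a.FG → mu a ≤ htIdeal a →
    a.minimalPrimes = wAss R (R ⧸ a)

/-- `R` is a coherent ring: every finitely generated ideal is finitely presented
as an `R`-module. -/
def IsCoherent (R : Type*) [CommRing R] : Prop :=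
  ∀ I : Ideal R, I.FG → Module.FinitePresentation R I

end Koszul

section ExtGrade

variable {R : Type u} [CommRing R]

/-- The Ext grade of an ideal `a` on `M`: `inf { i | Ext^i_R(R/a, M) ≠ 0 }`
(with `inf ∅ = +∞`). -/
def egrade (a : Ideal R) (M : Type u) [AddCommGroup M] [Module R M] : ℕ∞ :=
  ⨅ (i : ℕ) (_ : Nontrivial
      (((Ext R (ModuleCat.{u} R) i).obj
        (Opposite.op (ModuleCat.of R (R ⧸ a)))).obj (ModuleCat.of R M))), (i : ℕ∞)

/-- The local cohomology grade of an ideal `a` on `M`: `inf { i | H^i_a(M) ≠ 0 }`,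
where `H^i_a(M) = colimₙ Ext^i_R(R/aⁿ, M)` is the `i`-th local cohomology module of `M`
with support in `a` (with `inf ∅ = +∞`). -/
def hgrade (a : Ideal R) (M : Type u) [AddCommGroup M] [Module R M] : ℕ∞ :=
  ⨅ (i : ℕ) (_ : Nontrivial ((localCohomology a i).obj (ModuleCat.of R M))), (i : ℕ∞)

end ExtGrade

section Fixed

/-- The subring of invariants `R^G` of a group `G` acting on a commutative ring `R`
by ring automorphisms. -/
def fixedSubring (G R : Type*) [Group G] [CommRing R] [MulSemiringAction G R] : Subring R where
  carrier := MulAction.fixedPoints G R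
  zero_mem' := fun g => smul_zero g
  one_mem' := fun g => smul_one g
  add_mem' := fun {a b} ha hb g => by rw [smul_add, ha g, hb g]
  mul_mem' := fun {a b} ha hb g => by rw [smul_mul', ha g, hb g]
  neg_mem' := fun {a} ha g => by rw [smul_neg, ha g]

end Fixed

end NNCM
end
namespace NNCM

section Aux
variable {G R : Type*} [Group G] [Finite G] [CommRing R] [MulSemiringAction G R]

theorem fixedSubring_isIntegral : Algebra.IsIntegral (fixedSubring G R) R := by
  haveI := Fintype.ofFinite G
  constructor
  intro x
  refine ⟨(prodXSubSMul G R x).toSubring (fixedSubring G R)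
    (show ((prodXSubSMul G R x).coeffs : Set R) ⊆ fixedSubring G R from fun c hc g => ?_), ?_, ?_⟩
  · obtain ⟨n, _, hn⟩ := Polynomial.mem_coeffs_iff.1 hc
    exact hn.symm ▸ prodXSubSMul.coeff G R x g n
  · exact (Polynomial.monic_toSubring _ _ _).mpr (prodXSubSMul.monic G R x)
  · show Polynomial.eval₂ (algebraMap (fixedSubring G R) R) x _ = 0
    rw [Polynomial.eval₂_eq_eval_map]
    show Polynomial.eval x (Polynomial.map (Subring.subtype (fixedSubring G R)) _) = 0
    rw [Polynomial.map_toSubring]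
    exact prodXSubSMul.eval G R x

end Aux

section Reynolds
variable {G R : Type*} [Group G] [Fintype G] [CommRing R] [MulSemiringAction G R]

/-- The (unnormalized) Reynolds sum, landing in the fixed subring. -/
noncomputable def reySum (y : R) : fixedSubring G R :=
  ⟨∑ g : G, g • y, fun g' => by
    rw [Finset.smul_sum]
    exact Fintype.sum_bijective (g' * ·) (Group.mulLeft_bijective g') _ _
      (fun g => (mul_smul g' g y).symm)⟩

theorem reySum_coe (y : R) : (reySum (G := G) y : R) = ∑ g : G, g • y := rfl

theorem reySum_add (y z : R) : reySum (G := G) (y + z) = reySum y + reySum z := by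
  ext
  simp [reySum_coe, smul_add, Finset.sum_add_distrib]

theorem reySum_zero : reySum (G := G) (0 : R) = 0 := by
  ext; simp [reySum_coe]

theorem reySum_fixed_mul (c : fixedSubring G R) (y : R) :
    reySum (G := G) ((c : R) * y) = c * reySum y := by
  ext
  simp only [reySum_coe, Subring.coe_mul, Finset.mul_sum]
  exact Finset.sum_congr rfl fun g _ => by rw [smul_mul', c.2 g]

theorem reySum_coe_elt (c : fixedSubring G R) :
    reySum (G := G) (c : R) = (Nat.card G : fixedSubring G R) * c := by
  ext
  rw [reySum_coe]
  rw [Finset.sum_congr rfl fun (g : G) _ => c.2 g]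
  simp [Nat.card_eq_fintype_card, mul_comm]

theorem isUnit_card_fixed (hG : IsUnit ((Nat.card G : ℕ) : R)) :
    IsUnit ((Nat.card G : ℕ) : fixedSubring G R) := by
  obtain ⟨u, hu⟩ := hG
  have hinv : ∀ g : G, g • (↑u⁻¹ : R) = ↑u⁻¹ := by
    intro g
    have h1 : g • ((↑u⁻¹ : R) * (↑u : R)) = 1 := by
      rw [Units.inv_mul]; exact smul_one g
    have hu' : g • (↑u : R) = ↑u := by
      rw [hu]; exact map_natCast (MulSemiringAction.toRingHom G R g) _
    rw [smul_mul', hu'] at h1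
    calc g • (↑u⁻¹ : R) = g • (↑u⁻¹ : R) * (↑u : R) * (↑u⁻¹ : R) := by
          rw [mul_assoc, Units.mul_inv, mul_one]
      _ = ↑u⁻¹ := by rw [h1, one_mul]
  refine isUnit_iff_exists.mpr ⟨⟨(↑u⁻¹ : R), hinv⟩, ?_, ?_⟩ <;>
    · ext
      push_cast
      simp [← hu, ← Nat.card_eq_fintype_card]

theorem comap_map_fixedSubring (hG : IsUnit ((Nat.card G : ℕ) : R))
    (a : Ideal (fixedSubring G R)) :
    (a.map (algebraMap (fixedSubring G R) R)).comap (algebraMap (fixedSubring G R) R) = a := by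
  refine le_antisymm ?_ Ideal.le_comap_map
  intro x hx
  have key : ∀ y ∈ a.map (algebraMap (fixedSubring G R) R), ∀ r : R,
      reySum (G := G) (r * y) ∈ a := by
    intro y hy
    refine Submodule.span_induction ?_ ?_ ?_ ?_ hy
    · rintro _ ⟨c, hc, rfl⟩ r
      rw [mul_comm, show (algebraMap (fixedSubring G R) R) c = (c : R) from rfl,
        reySum_fixed_mul]
      exact Ideal.mul_mem_right _ a hc
    · intro r; rw [mul_zero, reySum_zero]; exact a.zero_mem
    · intro y z _ _ hy hz r
      rw [mul_add, reySum_add]; exact a.add_mem (hy r) (hz r)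
    · intro r' y _ hy r
      rw [smul_eq_mul, ← mul_assoc]; exact hy (r * r')
  have hx' := key _ hx 1
  rw [one_mul, show (algebraMap (fixedSubring G R) R) x = (x : R) from rfl,
    reySum_coe_elt] at hx'
  obtain ⟨v, hv⟩ := isUnit_card_fixed (G := G) hG
  have h2 := a.mul_mem_left (↑v⁻¹) hx'
  rwa [← hv, Units.inv_mul_cancel_left] at h2

end Reynolds

section GoingDown
variable {G R : Type*} [Group G] [Fintype G] [CommRing R] [MulSemiringAction G R]

/-- Contraction of a conjugated prime agrees with contraction. -/
theorem comap_smul_comap (Q : Ideal R) (g : G) :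
    (Q.comap (MulSemiringAction.toRingHom G R g)).comap (algebraMap (fixedSubring G R) R)
      = Q.comap (algebraMap (fixedSubring G R) R) := by
  ext x
  show g • (x : R) ∈ Q ↔ (x : R) ∈ Q
  rw [x.2 g]

/-- Transitivity of the `G`-action on primes lying over a given prime. -/
theorem exists_comap_smul_eq (P Q : Ideal R) [P.IsPrime] [Q.IsPrime]
    (h : P.comap (algebraMap (fixedSubring G R) R) = Q.comap (algebraMap (fixedSubring G R) R)) :
    ∃ g : G, Q.comap (MulSemiringAction.toRingHom G R g) = P := by
  classical
  haveI : Algebra.IsIntegral (fixedSubring G R) R := fixedSubring_isIntegral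
  have hsub : (P : Set R) ⊆ ⋃ g ∈ ((Finset.univ : Finset G) : Set G),
      (Q.comap (MulSemiringAction.toRingHom G R g) : Set R) := by
    intro x hx
    have hfix : ∀ g' : G, g' • (∏ g : G, g • x) = ∏ g : G, g • x := by
      intro g'
      rw [Finset.smul_prod']
      exact Fintype.prod_bijective (g' * ·) (Group.mulLeft_bijective g') _ _
        (fun g => (mul_smul g' g x).symm)
    have hmem : (∏ g : G, g • x) ∈ P := by
      rw [← Finset.mul_prod_erase Finset.univ _ (Finset.mem_univ (1 : G)), one_smul]
      exact Ideal.mul_mem_right _ P hx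
    have : (⟨∏ g : G, g • x, hfix⟩ : fixedSubring G R) ∈
        Q.comap (algebraMap (fixedSubring G R) R) := h ▸ hmem
    have hQ : (∏ g : G, g • x) ∈ Q := this
    obtain ⟨g, -, hg⟩ := (Ideal.IsPrime.prod_mem_iff).mp hQ
    exact Set.mem_biUnion (Finset.mem_univ g) hg
  obtain ⟨g, -, hle⟩ := (Ideal.subset_union_prime 1 1 (fun i _ _ _ => Ideal.comap_isPrime (MulSemiringAction.toRingHom G R i) Q)).mp
    hsub
  refine ⟨g, le_antisymm ?_ hle⟩
  by_contra hne
  have hlt : P < Q.comap (MulSemiringAction.toRingHom G R g) := lt_of_le_of_ne hle (by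
    intro he; exact hne (le_of_eq he.symm))
  obtain ⟨x, hxQ, hxP⟩ := SetLike.exists_of_lt hlt
  have := Ideal.comap_lt_comap_of_integral_mem_sdiff (R := fixedSubring G R) hle ⟨hxQ, hxP⟩
    (Algebra.IsIntegral.isIntegral x)
  rw [comap_smul_comap, h] at this
  exact lt_irrefl _ this

/-- Going down for the fixed subring extension. -/
theorem going_down (q p : Ideal (fixedSubring G R)) [q.IsPrime] [p.IsPrime] (hqp : q ≤ p)
    (P : Ideal R) [P.IsPrime] (hP : P.comap (algebraMap (fixedSubring G R) R) = p) :
    ∃ Q : Ideal R, Q.IsPrime ∧ Q ≤ P ∧ Q.comap (algebraMap (fixedSubring G R) R) = q := by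
  haveI : Algebra.IsIntegral (fixedSubring G R) R := fixedSubring_isIntegral
  obtain ⟨Q₀, -, hQ₀p, hQ₀c⟩ := Ideal.exists_ideal_over_prime_of_isIntegral q (⊥ : Ideal R) (by
    rw [← RingHom.ker_eq_comap_bot, (RingHom.injective_iff_ker_eq_bot _).mp
      (Subtype.val_injective (p := (· ∈ fixedSubring G R)))]
    exact bot_le)
  haveI := hQ₀p
  obtain ⟨Q₂, hQ₀Q₂, hQ₂p, hQ₂c⟩ := Ideal.exists_ideal_over_prime_of_isIntegral p Q₀
    (hQ₀c ▸ hqp)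
  haveI := hQ₂p
  obtain ⟨g, hg⟩ := exists_comap_smul_eq P Q₂ (by rw [hP, hQ₂c])
  refine ⟨Q₀.comap (MulSemiringAction.toRingHom G R g), Ideal.comap_isPrime _ _, ?_, ?_⟩
  · rw [← hg]; exact Ideal.comap_mono hQ₀Q₂
  · rw [comap_smul_comap, hQ₀c]

end GoingDown

section Height
variable {G R : Type*} [Group G] [Fintype G] [CommRing R] [MulSemiringAction G R]

/-- Contraction of primes to the fixed subring, as a map of prime spectra. -/
def specComap (P : PrimeSpectrum R) : PrimeSpectrum (fixedSubring G R) :=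
  ⟨P.asIdeal.comap (algebraMap (fixedSubring G R) R), Ideal.comap_isPrime _ _⟩

theorem exists_ltSeries_lift :
    ∀ (n : ℕ) (ℓ : LTSeries (PrimeSpectrum (fixedSubring G R))), ℓ.length = n →
    ∀ Q : PrimeSpectrum R, specComap (G := G) Q = ℓ.last →
      ∃ L : LTSeries (PrimeSpectrum R), L.length = n ∧ L.last = Q := by
  intro n
  induction n with
  | zero => exact fun ℓ hn Q hQ => ⟨RelSeries.singleton _ Q, rfl, RelSeries.last_singleton Q⟩
  | succ m ih =>
    intro ℓ hn Q hQ
    haveI := (ℓ.eraseLast.last).isPrime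
    haveI := (ℓ.last).isPrime
    haveI := Q.isPrime
    have hlt : ℓ.eraseLast.last < ℓ.last := ℓ.eraseLast_last_rel_last (by omega)
    obtain ⟨Q', hQ'p, hQ'le, hQ'c⟩ := going_down ℓ.eraseLast.last.asIdeal ℓ.last.asIdeal
      (le_of_lt ((PrimeSpectrum.asIdeal_lt_asIdeal _ _).mpr hlt)) Q.asIdeal
      (congrArg PrimeSpectrum.asIdeal hQ)
    haveI := hQ'p
    have h1 : specComap (G := G) (⟨Q', hQ'p⟩ : PrimeSpectrum R) = ℓ.eraseLast.last :=
      PrimeSpectrum.ext hQ'c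
    have hne : (⟨Q', hQ'p⟩ : PrimeSpectrum R) ≠ Q := fun he => hlt.ne (by rw [← h1, he, hQ])
    have hlen' : ℓ.eraseLast.length = m := by
      have : ℓ.eraseLast.length = ℓ.length - 1 := rfl
      omega
    obtain ⟨L', hL'len, hL'last⟩ := ih ℓ.eraseLast hlen' ⟨Q', hQ'p⟩ h1
    have hrel : L'.last < Q := by
      rw [hL'last]
      exact lt_of_le_of_ne ((PrimeSpectrum.asIdeal_le_asIdeal _ _).mp hQ'le) hne
    refine ⟨L'.snoc Q hrel, by rw [← hL'len]; rfl, RelSeries.last_snoc _ _ _⟩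

theorem height_specComap_le (P : PrimeSpectrum R) :
    Order.height (specComap (G := G) P) ≤ Order.height P := by
  rw [Order.height]
  refine iSup₂_le fun ℓ hlast => ?_
  haveI := (ℓ.last).isPrime
  haveI := P.isPrime
  obtain ⟨Q', hQ'p, hQ'le, hQ'c⟩ := going_down ℓ.last.asIdeal (specComap (G := G) P).asIdeal
    ((PrimeSpectrum.asIdeal_le_asIdeal _ _).mpr hlast) P.asIdeal rfl
  haveI := hQ'p
  obtain ⟨L, hLlen, hLlast⟩ := exists_ltSeries_lift ℓ.length ℓ rfl ⟨Q', hQ'p⟩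
    (PrimeSpectrum.ext hQ'c)
  have : L.last ≤ P := by
    rw [hLlast]; exact (PrimeSpectrum.asIdeal_le_asIdeal _ _).mp hQ'le
  calc (ℓ.length : ℕ∞) = L.length := by rw [hLlen]
    _ ≤ Order.height P := Order.length_le_height this

end Height


section Transfer

theorem mu_map_le {R S : Type*} [CommRing R] [CommRing S] (f : R →+* S) (a : Ideal R) :
    mu (a.map f) ≤ mu a := by
  refine le_iInf fun m => le_iInf fun hm => ?_
  obtain ⟨x, hx⟩ := hm
  refine iInf₂_le m ⟨fun k => f (x k), ?_⟩
  have : Set.range (fun k => f (x k)) = f '' Set.range x := by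
    rw [← Set.range_comp]; rfl
  rw [this, ← Ideal.map_span, hx]

theorem smul_quot_mk {S : Type*} [CommRing S] (a : Ideal S) (x y : S) :
    x • Ideal.Quotient.mk a y = Ideal.Quotient.mk a (x * y) := by
  show x • Submodule.Quotient.mk y = _
  rw [← Submodule.Quotient.mk_smul, smul_eq_mul]
  rfl

theorem mem_torsionOf_quot_iff {S : Type*} [CommRing S] (a : Ideal S) (x y : S) :
    x ∈ Ideal.torsionOf S (S ⧸ a) (Ideal.Quotient.mk a y) ↔ x * y ∈ a := by
  rw [Ideal.mem_torsionOf_iff, smul_quot_mk, Ideal.Quotient.eq_zero_iff_mem]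

theorem minimalPrimes_subset_wAss {S : Type*} [CommRing S] (a : Ideal S) :
    a.minimalPrimes ⊆ wAss S (S ⧸ a) := by
  intro p hp
  refine ⟨(1 : S ⧸ a), ?_⟩
  have h1 : Ideal.torsionOf S (S ⧸ a) 1 = a := by
    ext x
    rw [show (1 : S ⧸ a) = Ideal.Quotient.mk a 1 from (map_one _).symm,
      mem_torsionOf_quot_iff, mul_one]
  rwa [h1]

variable {G R : Type*} [Group G] [Fintype G] [CommRing R] [MulSemiringAction G R]

theorem htIdeal_le_map (a : Ideal (fixedSubring G R)) :
    htIdeal a ≤ htIdeal (a.map (algebraMap (fixedSubring G R) R)) := by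
  refine le_iInf fun P => le_iInf fun hP => ?_
  have h1 : a ≤ (specComap (G := G) P).asIdeal := Ideal.map_le_iff_le_comap.mp hP
  exact le_trans (iInf₂_le (specComap (G := G) P) h1) (height_specComap_le P)

end Transfer


set_option synthInstance.maxHeartbeats 1000000

/-- Let `R` be a weak Bourbaki unmixed commutative ring and `G` a finite
group of ring automorphisms of `R` whose order is a unit in `R`. Then the ring of invariants
`R^G` is weak Bourbaki unmixed. -/
theorem fixedSubring_wbUnmixed {G R : Type*} [Group G] [Finite G]
    [CommRing R] [MulSemiringAction G R] (hG : IsUnit ((Nat.card G : ℕ) : R))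
    (hR : WBUnmixed R) :
    WBUnmixed (↥(fixedSubring G R)) := by
  classical
  haveI := Fintype.ofFinite G
  haveI : Algebra.IsIntegral (fixedSubring G R) R := fixedSubring_isIntegral
  intro a hFG hmuht
  set f := algebraMap (fixedSubring G R) R with hf
  set b := a.map f with hb'
  have hcontr : b.comap f = a := comap_map_fixedSubring hG a
  have hb : b.minimalPrimes = wAss R (R ⧸ b) := by
    refine hR b (hFG.map f) ?_
    exact le_trans (mu_map_le f a) (le_trans hmuht (htIdeal_le_map a))
  refine Set.eq_of_subset_of_subset (minimalPrimes_subset_wAss a) ?_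
  rintro p ⟨c, hc⟩
  obtain ⟨c₀, rfl⟩ := Ideal.Quotient.mk_surjective c
  haveI hpprime : p.IsPrime := hc.1.1
  set m : R ⧸ b := Ideal.Quotient.mk b ((c₀ : R)) with hm
  have hcomap : (Ideal.torsionOf R (R ⧸ b) m).comap f
      = Ideal.torsionOf (fixedSubring G R) ((fixedSubring G R) ⧸ a) (Ideal.Quotient.mk a c₀) := by
    ext x
    rw [Ideal.mem_comap, hm, Ideal.mem_torsionOf_iff, smul_quot_mk,
      Ideal.Quotient.eq_zero_iff_mem, mem_torsionOf_quot_iff]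
    have : f x * (c₀ : R) = f (x * c₀) := (map_mul f x c₀).symm
    rw [this, show (f (x * c₀) ∈ b) ↔ x * c₀ ∈ b.comap f from Iff.rfl, hcontr]
  have hp' : p ∈ ((Ideal.torsionOf R (R ⧸ b) m).comap f).minimalPrimes := by
    rw [hcomap]; exact hc
  obtain ⟨P, hIP, hPprime, hPc⟩ := Ideal.exists_ideal_over_prime_of_isIntegral p
    (Ideal.torsionOf R (R ⧸ b) m) hp'.1.2
  haveI := hPprime
  obtain ⟨Q, hQmin, hQP⟩ := Ideal.exists_minimalPrimes_le hIP
  haveI hQprime : Q.IsPrime := hQmin.1.1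
  have hQc : Q.comap f = p := by
    have h2 : Q.comap f ≤ p := hPc ▸ Ideal.comap_mono hQP
    exact le_antisymm h2 (hp'.2 ⟨Ideal.comap_isPrime f Q, Ideal.comap_mono hQmin.1.2⟩ h2)
  have hQb : Q ∈ b.minimalPrimes := by
    rw [hb]; exact ⟨m, hQmin⟩
  constructor
  · refine ⟨hpprime, ?_⟩
    refine le_trans ?_ hc.1.2
    intro x hx
    rw [mem_torsionOf_quot_iff]
    exact a.mul_mem_right c₀ hx
  · rintro q ⟨hqprime, hqa⟩ hqp
    haveI := hqprime
    obtain ⟨Q', hQ'p, hQ'le, hQ'c⟩ := going_down q p hqp Q hQc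
    haveI := hQ'p
    have hbQ' : b ≤ Q' := Ideal.map_le_iff_le_comap.mpr (hQ'c ▸ hqa)
    have hQQ' : Q ≤ Q' := hQb.2 ⟨hQ'p, hbQ'⟩ hQ'le
    have : Q = Q' := le_antisymm hQQ' hQ'le
    rw [← hQc, this, hQ'c]

end NNCM
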